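/- Let V be a real vector space, F an affine subspace, L₀ ⊂ F convex, and define the absolute robustness w(x) = sup_{y ∈ L₀} w(x|y), where w(x|y) = sup{t ∈ [0,1] : t•x + (1-t)•y ∈ L₀}. Then x ↦ 1/w(x) is convex: for x₁, x₂ ∈ F and t ∈ [0,1], 1/w(t•x₁+(1-t)•x₂) ≤ t/w(x₁) + (1-t)/w(x₂). -/

import Mathlib

open scoped ENNReal

/-- Relative robustness: `w(x|y) = sup {t ∈ [0,1] | t•x + (1-t)•y ∈ L₀}`, with `sSup ∅ = 0`. -/
noncomputable def relRob {V : Type*} [AddCommGroup V] [Module ℝ V]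
    (L₀ : Set V) (x y : V) : ℝ :=
  sSup {t : ℝ | t ∈ Set.Icc (0 : ℝ) 1 ∧ t • x + (1 - t) • y ∈ L₀}

/-- Absolute robustness: `w(x) = sup_{y ∈ L₀} w(x|y)`. -/
noncomputable def absRob {V : Type*} [AddCommGroup V] [Module ℝ V]
    (L₀ : Set V) (x : V) : ℝ :=
  sSup ((fun y => relRob L₀ x y) '' L₀)

/-! If `sᵢ • xᵢ + (1 - sᵢ) • yᵢ ∈ L₀` with `yᵢ ∈ L₀`, a convex combination of these two points of
`L₀` lies on the segment from a convex combination `y` of `y₁, y₂` to `t • x₁ + (1 - t) • x₂`, at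
the parameter `s` with `1 / s = t / s₁ + (1 - t) / s₂`. Taking `sᵢ = c * w(xᵢ)` with `c < 1`
and letting `c → 1` passes to the suprema. -/

open Set Filter Topology

section Robustness

variable {V : Type*} [AddCommGroup V] [Module ℝ V] {L₀ : Set V}

lemma relRob_le_one (L₀ : Set V) (x y : V) : relRob L₀ x y ≤ 1 :=
  Real.sSup_le (fun _ hs => hs.1.2) zero_le_one

lemma relRob_le_absRob {x y : V} (hy : y ∈ L₀) : relRob L₀ x y ≤ absRob L₀ x :=
  le_csSup ⟨1, by rintro _ ⟨y, -, rfl⟩; exact relRob_le_one L₀ x y⟩ ⟨y, hy, rfl⟩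

lemma absRob_le_one (L₀ : Set V) (x : V) : absRob L₀ x ≤ 1 :=
  Real.sSup_le (by rintro _ ⟨y, -, rfl⟩; exact relRob_le_one L₀ x y) zero_le_one

lemma le_absRob {x y : V} {s : ℝ} (hy : y ∈ L₀) (hs : s ∈ Icc (0 : ℝ) 1)
    (hmem : s • x + (1 - s) • y ∈ L₀) : s ≤ absRob L₀ x := by
  have hrel : s ≤ relRob L₀ x y := le_csSup ⟨1, fun _ h => h.1.2⟩ ⟨hs, hmem⟩
  exact hrel.trans (relRob_le_absRob hy)

/-- For `y ∈ L₀`, convexity makes the set defining `relRob L₀ x y` an initial segment of `[0, 1]`. -/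
lemma mem_of_lt_relRob (hL₀ : Convex ℝ L₀) {x y : V} (hy : y ∈ L₀) {s : ℝ}
    (hs : 0 ≤ s) (h : s < relRob L₀ x y) : s • x + (1 - s) • y ∈ L₀ := by
  have hne : {t : ℝ | t ∈ Icc (0 : ℝ) 1 ∧ t • x + (1 - t) • y ∈ L₀}.Nonempty := by
    by_contra hemp
    rw [not_nonempty_iff_eq_empty] at hemp
    rw [relRob, hemp, Real.sSup_empty] at h
    linarith
  obtain ⟨r, ⟨⟨-, hr1⟩, hz⟩, hsr⟩ := exists_lt_of_lt_csSup hne h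
  have hr : 0 < r := hs.trans_lt hsr
  have hsegment : s • x + (1 - s) • y = (s / r) • (r • x + (1 - r) • y) + (1 - s / r) • y := by
    match_scalars
    · field_simp
    · field_simp; ring
  rw [hsegment]
  exact hL₀ hz hy (div_nonneg hs hr.le) (by linarith [(div_le_one hr).2 hsr.le]) (by ring)

lemma exists_mem_of_lt_absRob (hL₀ : Convex ℝ L₀) {x : V} {s : ℝ} (hs : 0 ≤ s)
    (h : s < absRob L₀ x) : ∃ y ∈ L₀, s • x + (1 - s) • y ∈ L₀ := by
  have hne : ((fun y => relRob L₀ x y) '' L₀).Nonempty := by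
    by_contra hemp
    rw [not_nonempty_iff_eq_empty] at hemp
    rw [absRob, hemp, Real.sSup_empty] at h
    linarith
  obtain ⟨_, ⟨y, hy, rfl⟩, hsy⟩ := exists_lt_of_lt_csSup hne h
  exact ⟨y, hy, mem_of_lt_relRob hL₀ hy hs hsy⟩

lemma one_lt_div_add_div {s₁ s₂ t : ℝ} (hs₁ : s₁ ∈ Ioo (0 : ℝ) 1) (hs₂ : s₂ ∈ Ioo (0 : ℝ) 1)
    (ht : t ∈ Icc (0 : ℝ) 1) : 1 < t / s₁ + (1 - t) / s₂ := by
  have hm : 0 < max s₁ s₂ := lt_max_of_lt_left hs₁.1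
  calc 1 < 1 / max s₁ s₂ := by rw [one_lt_div hm]; exact max_lt hs₁.2 hs₂.2
    _ = t / max s₁ s₂ + (1 - t) / max s₁ s₂ := by ring
    _ ≤ t / s₁ + (1 - t) / s₂ := by
      have : 0 ≤ 1 - t := sub_nonneg.2 ht.2
      gcongr
      exacts [ht.1, hs₁.1, le_max_left _ _, hs₂.1, le_max_right _ _]

lemma inv_div_add_div_le_absRob (hL₀ : Convex ℝ L₀) {x₁ x₂ y₁ y₂ : V} {s₁ s₂ t : ℝ}
    (hy₁ : y₁ ∈ L₀) (hy₂ : y₂ ∈ L₀)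
    (hz₁ : s₁ • x₁ + (1 - s₁) • y₁ ∈ L₀) (hz₂ : s₂ • x₂ + (1 - s₂) • y₂ ∈ L₀)
    (hs₁ : s₁ ∈ Ioo (0 : ℝ) 1) (hs₂ : s₂ ∈ Ioo (0 : ℝ) 1) (ht : t ∈ Icc (0 : ℝ) 1) :
    (t / s₁ + (1 - t) / s₂)⁻¹ ≤ absRob L₀ (t • x₁ + (1 - t) • x₂) := by
  have hinv := one_lt_div_add_div hs₁ hs₂ ht
  obtain ⟨hs₁0, hs₁1⟩ := hs₁
  obtain ⟨hs₂0, hs₂1⟩ := hs₂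
  obtain ⟨ht0, ht1⟩ := ht
  set s := (t / s₁ + (1 - t) / s₂)⁻¹
  have hs0 : 0 < s := inv_pos.2 (zero_lt_one.trans hinv)
  have hs1 : s < 1 := inv_lt_one_of_one_lt₀ hinv
  set a := s * t / s₁
  set b := s * (1 - t) / s₂
  have ha : a * s₁ = s * t := div_mul_cancel₀ _ hs₁0.ne'
  have hb : b * s₂ = s * (1 - t) := div_mul_cancel₀ _ hs₂0.ne'
  have hab : a + b = 1 := by
    calc a + b = s * (t / s₁ + (1 - t) / s₂) := by simp only [a, b]; ring
      _ = 1 := inv_mul_cancel₀ (by positivity)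
  set c₁ := a * (1 - s₁) / (1 - s)
  set c₂ := b * (1 - s₂) / (1 - s)
  have h1s : 1 - s ≠ 0 := by linarith
  have hc₁ : (1 - s) * c₁ = a * (1 - s₁) := mul_div_cancel₀ _ h1s
  have hc₂ : (1 - s) * c₂ = b * (1 - s₂) := mul_div_cancel₀ _ h1s
  have hc : c₁ + c₂ = 1 := by
    rw [← add_div, div_eq_one_iff_eq h1s]
    linear_combination hab - ha - hb
  have ha0 : 0 ≤ a := by positivity
  have hb0 : 0 ≤ b := div_nonneg (mul_nonneg hs0.le (by linarith)) hs₂0.le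
  have hy : c₁ • y₁ + c₂ • y₂ ∈ L₀ :=
    hL₀ hy₁ hy₂ (div_nonneg (mul_nonneg ha0 (by linarith)) (by linarith))
      (div_nonneg (mul_nonneg hb0 (by linarith)) (by linarith)) hc
  clear_value s a b c₁ c₂
  have hcomb : s • (t • x₁ + (1 - t) • x₂) + (1 - s) • (c₁ • y₁ + c₂ • y₂) =
      a • (s₁ • x₁ + (1 - s₁) • y₁) + b • (s₂ • x₂ + (1 - s₂) • y₂) := by
    match_scalars
    · linear_combination -ha
    · linear_combination -hb
    · linear_combination hc₁
    · linear_combination hc₂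
  refine le_absRob hy ⟨hs0.le, hs1.le⟩ ?_
  rw [hcomb]
  exact hL₀ hz₁ hz₂ ha0 hb0 hab

lemma inv_div_add_div_absRob_le (hL₀ : Convex ℝ L₀) {x₁ x₂ : V} {t : ℝ}
    (ht : t ∈ Icc (0 : ℝ) 1) (h₁ : 0 < absRob L₀ x₁) (h₂ : 0 < absRob L₀ x₂) :
    (t / absRob L₀ x₁ + (1 - t) / absRob L₀ x₂)⁻¹ ≤ absRob L₀ (t • x₁ + (1 - t) • x₂) := by
  set K := t / absRob L₀ x₁ + (1 - t) / absRob L₀ x₂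
  have hscaled : ∀ c ∈ Ioo (0 : ℝ) 1, K⁻¹ * c ≤ absRob L₀ (t • x₁ + (1 - t) • x₂) := by
    rintro c ⟨hc0, hc1⟩
    have hwitness : ∀ x, 0 < absRob L₀ x → c * absRob L₀ x ∈ Ioo (0 : ℝ) 1 ∧
        ∃ y ∈ L₀, (c * absRob L₀ x) • x + (1 - c * absRob L₀ x) • y ∈ L₀ := by
      intro x hx
      have hlt : c * absRob L₀ x < absRob L₀ x := mul_lt_of_lt_one_left hx hc1
      exact ⟨⟨mul_pos hc0 hx, hlt.trans_le (absRob_le_one L₀ x)⟩,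
        exists_mem_of_lt_absRob hL₀ (mul_pos hc0 hx).le hlt⟩
    obtain ⟨hs₁, y₁, hy₁, hz₁⟩ := hwitness x₁ h₁
    obtain ⟨hs₂, y₂, hy₂, hz₂⟩ := hwitness x₂ h₂
    have hK : t / (c * absRob L₀ x₁) + (1 - t) / (c * absRob L₀ x₂) = c⁻¹ * K := by
      simp only [K]; field_simp
    simpa [hK, mul_inv] using inv_div_add_div_le_absRob hL₀ hy₁ hy₂ hz₁ hz₂ hs₁ hs₂ ht
  refine le_of_tendsto (f := fun c => K⁻¹ * c) (x := 𝓝[<] 1) ?_ ?_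
  · exact ((continuous_const.mul continuous_id).tendsto' 1 K⁻¹ (mul_one _)).mono_left
      nhdsWithin_le_nhds
  · filter_upwards [Ioo_mem_nhdsLT one_pos] with c hc using hscaled c hc

end Robustness

lemma one_div_ofReal_le_of_inv_le {w w₁ w₂ t : ℝ} (ht : t ∈ Icc (0 : ℝ) 1) (hw₁ : 0 < w₁)
    (hw₂ : 0 < w₂) (h : (t / w₁ + (1 - t) / w₂)⁻¹ ≤ w) :
    1 / ENNReal.ofReal w ≤
      ENNReal.ofReal t / ENNReal.ofReal w₁ + ENNReal.ofReal (1 - t) / ENNReal.ofReal w₂ := by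
  have hK : 0 < t / w₁ + (1 - t) / w₂ := by
    rcases ht.1.eq_or_lt with rfl | ht0
    · simpa using hw₂
    · exact add_pos_of_pos_of_nonneg (div_pos ht0 hw₁) (div_nonneg (by linarith [ht.2]) hw₂.le)
  calc 1 / ENNReal.ofReal w ≤ 1 / ENNReal.ofReal (t / w₁ + (1 - t) / w₂)⁻¹ :=
        ENNReal.div_le_div_left (ENNReal.ofReal_le_ofReal h) _
    _ = ENNReal.ofReal (t / w₁ + (1 - t) / w₂) := by
        rw [ENNReal.ofReal_inv_of_pos hK, one_div, inv_inv]
    _ = _ := by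
        rw [ENNReal.ofReal_add (div_nonneg ht.1 hw₁.le) (div_nonneg (by linarith [ht.2]) hw₂.le),
          ENNReal.ofReal_div_of_pos hw₁, ENNReal.ofReal_div_of_pos hw₂]

theorem stmt2_general {V : Type*} [AddCommGroup V] [Module ℝ V]
    (L₀ : Set V) (hL₀ : Convex ℝ L₀)
    (x₁ x₂ : V)
    (t : ℝ) (ht : t ∈ Set.Icc (0 : ℝ) 1) :
    1 / ENNReal.ofReal (absRob L₀ (t • x₁ + (1 - t) • x₂)) ≤
      ENNReal.ofReal t / ENNReal.ofReal (absRob L₀ x₁) +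
      ENNReal.ofReal (1 - t) / ENNReal.ofReal (absRob L₀ x₂) := by
  rcases ht.1.eq_or_lt with rfl | ht0
  · simp
  rcases ht.2.eq_or_lt with rfl | ht1
  · simp
  rcases le_or_gt (absRob L₀ x₁) 0 with h₁ | h₁
  · rw [ENNReal.ofReal_of_nonpos h₁, ENNReal.div_zero (ENNReal.ofReal_pos.2 ht0).ne', top_add]
    exact le_top
  rcases le_or_gt (absRob L₀ x₂) 0 with h₂ | h₂
  · rw [ENNReal.ofReal_of_nonpos h₂, ENNReal.div_zero (ENNReal.ofReal_pos.2 (sub_pos.2 ht1)).ne',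
      add_top]
    exact le_top
  exact one_div_ofReal_le_of_inv_le ht h₁ h₂ (inv_div_add_div_absRob_le hL₀ ht h₁ h₂)

theorem stmt2 {V : Type*} [AddCommGroup V] [Module ℝ V]
    (F : AffineSubspace ℝ V) (L₀ : Set V)
    (hL₀F : L₀ ⊆ (F : Set V)) (hL₀ : Convex ℝ L₀)
    (x₁ x₂ : V) (hx₁ : x₁ ∈ F) (hx₂ : x₂ ∈ F)
    (t : ℝ) (ht : t ∈ Set.Icc (0 : ℝ) 1) :
    1 / ENNReal.ofReal (absRob L₀ (t • x₁ + (1 - t) • x₂)) ≤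
      ENNReal.ofReal t / ENNReal.ofReal (absRob L₀ x₁) +
      ENNReal.ofReal (1 - t) / ENNReal.ofReal (absRob L₀ x₂) :=
  stmt2_general L₀ hL₀ x₁ x₂ t ht
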